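/- arXiv:0808.3851 — 2 statements merged into one kernel-verified Lean document; each statement's English description precedes it below -/
import Mathlib

section
/- Every random unitary channel E(ρ) = Σ_j p_j U_j ρ U_j† (with p_j ≥ 0, Σ_j p_j = 1, and U_j unitary) is repeatable: there exist a finite-dimensional memory Hilbert space H_M, a unitary U on H_M ⊗ H_S, and a memory state ξ such that for every n ≥ 1 and every sequence of input states ρ_1,…,ρ_n, the channel induced on the n-th input by the sequential memory-channel model equals E. -/
open Matrix Kronecker BigOperators
open scoped ComplexOrder

noncomputable def vnEntropy {n : Type*} [Fintype n] [DecidableEq n] (ρ : Matrix n n ℂ) : ℝ :=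
  if h : ρ.IsHermitian then ∑ i, Real.negMulLog (h.eigenvalues i) else 0

def IsDensity {n : Type*} [Fintype n] [DecidableEq n] (ρ : Matrix n n ℂ) : Prop :=
  ρ.PosSemidef ∧ ρ.trace = 1

def IsUnitary {n : Type*} [Fintype n] [DecidableEq n] (U : Matrix n n ℂ) : Prop :=
  U * Uᴴ = 1 ∧ Uᴴ * U = 1

noncomputable def ptraceMem {μ s : Type*} [Fintype μ] (X : Matrix (μ × s) (μ × s) ℂ) : Matrix s s ℂ :=
  Matrix.of fun i j => ∑ a, X (a, i) (a, j)

noncomputable def ptraceSys {μ s : Type*} [Fintype s] (X : Matrix (μ × s) (μ × s) ℂ) : Matrix μ μ ℂ :=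
  Matrix.of fun a b => ∑ i, X (a, i) (b, i)

noncomputable def inducedChan {μ s : Type*} [Fintype μ] [Fintype s]
    (U : Matrix (μ × s) (μ × s) ℂ) (ξ : Matrix μ μ ℂ) (ρ : Matrix s s ℂ) : Matrix s s ℂ :=
  ptraceMem (U * (ξ ⊗ₖ ρ) * Uᴴ)

noncomputable def memUpdate {μ s : Type*} [Fintype μ] [Fintype s]
    (U : Matrix (μ × s) (μ × s) ℂ) (ξ : Matrix μ μ ℂ) (ρ : Matrix s s ℂ) : Matrix μ μ ℂ :=
  ptraceSys (U * (ξ ⊗ₖ ρ) * Uᴴ)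

def ctrlU {μ s : Type*} [DecidableEq μ] (Uf : μ → Matrix s s ℂ) : Matrix (μ × s) (μ × s) ℂ :=
  Matrix.of fun p q => if p.1 = q.1 then Uf p.1 p.2 q.2 else 0

def extendMap {n m : Type*} [Fintype n] [DecidableEq n]
    (E : Matrix n n ℂ →ₗ[ℂ] Matrix n n ℂ) (ρ : Matrix (n × m) (n × m) ℂ) :
    Matrix (n × m) (n × m) ℂ :=
  Matrix.of fun p q => E (Matrix.of fun i j => ρ (i, p.2) (j, q.2)) p.1 q.1

def IsCP {n : Type*} [Fintype n] [DecidableEq n]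
    (E : Matrix n n ℂ →ₗ[ℂ] Matrix n n ℂ) : Prop :=
  ∀ (k : ℕ) (ρ : Matrix (n × Fin k) (n × Fin k) ℂ), ρ.PosSemidef → (extendMap E ρ).PosSemidef

def IsTP {n : Type*} [Fintype n] [DecidableEq n]
    (E : Matrix n n ℂ →ₗ[ℂ] Matrix n n ℂ) : Prop :=
  ∀ ρ, (E ρ).trace = ρ.trace

noncomputable def mlog {n : Type*} [Fintype n] [DecidableEq n] (ρ : Matrix n n ℂ) :
    Matrix n n ℂ :=
  if h : ρ.IsHermitian then
    (h.eigenvectorUnitary : Matrix n n ℂ) *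
      Matrix.diagonal (fun i => (Real.log (h.eigenvalues i) : ℂ)) *
      (h.eigenvectorUnitary : Matrix n n ℂ)ᴴ
  else 0

noncomputable def relEntropy {n : Type*} [Fintype n] [DecidableEq n]
    (ρ ω : Matrix n n ℂ) : ℝ :=
  ((ρ * (mlog ρ - mlog ω)).trace).re


set_option linter.unusedSectionVars false

section AuxRepeat
variable {ι s : Type*} [Fintype ι] [DecidableEq ι] [Fintype s] [DecidableEq s]

lemma ctrlU_mul_aux (A B : ι → Matrix s s ℂ) :
    ctrlU A * ctrlU B = ctrlU (fun a => A a * B a) := by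
  ext ⟨a, i⟩ ⟨b, j⟩
  simp only [Matrix.mul_apply, ctrlU, Matrix.of_apply, Fintype.sum_prod_type,
    ite_mul, zero_mul, mul_ite, mul_zero]
  simp only [Finset.sum_ite_irrel, Finset.sum_const_zero, Finset.sum_ite_eq,
    Finset.sum_ite_eq', Finset.mem_univ, if_true]
  by_cases h : a = b <;> simp [h, Matrix.mul_apply]

lemma ctrlU_conjT_aux (A : ι → Matrix s s ℂ) :
    (ctrlU A)ᴴ = ctrlU (fun a => (A a)ᴴ) := by
  ext ⟨a, i⟩ ⟨b, j⟩
  simp only [Matrix.conjTranspose_apply, ctrlU, Matrix.of_apply]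
  by_cases h : a = b <;> simp [h, eq_comm]

lemma ctrlU_one_aux : ctrlU (fun _ : ι => (1 : Matrix s s ℂ)) = 1 := by
  ext ⟨a, i⟩ ⟨b, j⟩
  simp only [ctrlU, Matrix.of_apply, Matrix.one_apply, Prod.mk.injEq, Prod.ext_iff]
  by_cases h : a = b <;> by_cases h2 : i = j <;> simp [h, h2]

lemma ctrlU_conj_key (Uf : ι → Matrix s s ℂ) (ξ : Matrix ι ι ℂ) (ρ : Matrix s s ℂ)
    (a b : ι) (i j : s) :
    (ctrlU Uf * (ξ ⊗ₖ ρ) * (ctrlU Uf)ᴴ) (a, i) (b, j)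
      = ξ a b * (Uf a * ρ * (Uf b)ᴴ) i j := by
  simp only [Matrix.mul_apply, Matrix.conjTranspose_apply, ctrlU, Matrix.kroneckerMap_apply,
    Matrix.of_apply, Fintype.sum_prod_type, apply_ite (star : ℂ → ℂ), star_zero,
    mul_ite, mul_zero, ite_mul, zero_mul]
  simp only [Finset.sum_ite_irrel, Finset.sum_const_zero, Finset.sum_ite_eq,
    Finset.sum_ite_eq', Finset.mem_univ, if_true]
  rw [Finset.mul_sum]
  refine Finset.sum_congr rfl fun l _ => ?_
  rw [Finset.sum_mul, ← mul_assoc, Finset.mul_sum, Finset.sum_mul]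
  refine Finset.sum_congr rfl fun k _ => ?_
  ring

lemma trace_conj_unitary (V : Matrix s s ℂ) (hV : IsUnitary V) (ρ : Matrix s s ℂ) :
    (V * ρ * Vᴴ).trace = ρ.trace := by
  rw [Matrix.trace_mul_cycle, hV.2, Matrix.one_mul]

lemma memUpdate_fix (Uf : ι → Matrix s s ℂ) (hUf : ∀ j, IsUnitary (Uf j))
    (p : ι → ℝ) (ρ : Matrix s s ℂ) (hρ : ρ.trace = 1) :
    memUpdate (ctrlU Uf) (Matrix.diagonal fun j => (p j : ℂ)) ρ
      = Matrix.diagonal fun j => (p j : ℂ) := by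
  ext a b
  simp only [memUpdate, ptraceSys, Matrix.of_apply, ctrlU_conj_key]
  rw [← Finset.mul_sum]
  by_cases h : a = b
  · subst h
    have ht : ∑ i, (Uf a * ρ * (Uf a)ᴴ) i i = (Uf a * ρ * (Uf a)ᴴ).trace := rfl
    rw [ht, trace_conj_unitary _ (hUf a) _, hρ, mul_one]
  · simp [Matrix.diagonal_apply_ne _ h]

lemma inducedChan_eq (Uf : ι → Matrix s s ℂ) (p : ι → ℝ) (ρ : Matrix s s ℂ) :
    inducedChan (ctrlU Uf) (Matrix.diagonal fun j => (p j : ℂ)) ρ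
      = ∑ j, (p j : ℂ) • (Uf j * ρ * (Uf j)ᴴ) := by
  ext i j
  simp only [inducedChan, ptraceMem, Matrix.of_apply, ctrlU_conj_key,
    Matrix.sum_apply, Matrix.smul_apply, Matrix.diagonal_apply_eq, smul_eq_mul]

end AuxRepeat

theorem random_unitary_repeatable
    {ι s : Type*} [Fintype ι] [DecidableEq ι] [Fintype s] [DecidableEq s]
    (p : ι → ℝ) (hp : ∀ j, 0 ≤ p j) (hsum : ∑ j, p j = 1)
    (Uf : ι → Matrix s s ℂ) (hUf : ∀ j, IsUnitary (Uf j))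
    (E : Matrix s s ℂ → Matrix s s ℂ)
    (hE : ∀ ρ, E ρ = ∑ j, (p j : ℂ) • (Uf j * ρ * (Uf j)ᴴ)) :
    ∃ (U : Matrix (ι × s) (ι × s) ℂ) (ξ : Matrix ι ι ℂ),
      IsUnitary U ∧ IsDensity ξ ∧
      ∀ (ρs : ℕ → Matrix s s ℂ), (∀ k, IsDensity (ρs k)) →
        ∀ (ξseq : ℕ → Matrix ι ι ℂ), ξseq 0 = ξ →
          (∀ k, ξseq (k + 1) = memUpdate U (ξseq k) (ρs k)) →
          ∀ n, inducedChan U (ξseq n) (ρs n) = E (ρs n) := by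
  refine ⟨ctrlU Uf, Matrix.diagonal fun j => (p j : ℂ), ⟨?_, ?_⟩, ⟨?_, ?_⟩, ?_⟩
  · rw [ctrlU_conjT_aux, ctrlU_mul_aux,
      show (fun a => Uf a * (Uf a)ᴴ) = fun _ : ι => (1 : Matrix s s ℂ) from
        funext fun a => (hUf a).1, ctrlU_one_aux]
  · rw [ctrlU_conjT_aux, ctrlU_mul_aux,
      show (fun a => (Uf a)ᴴ * Uf a) = fun _ : ι => (1 : Matrix s s ℂ) from
        funext fun a => (hUf a).2, ctrlU_one_aux]
  · exact Matrix.posSemidef_diagonal_iff.mpr fun i => by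
      exact_mod_cast Complex.zero_le_real.mpr (hp i)
  · rw [Matrix.trace_diagonal]
    exact_mod_cast congrArg Complex.ofReal hsum
  · intro ρs hρs ξseq h0 hstep n
    have hseq : ∀ m, ξseq m = Matrix.diagonal fun j => (p j : ℂ) := by
      intro m
      induction m with
      | zero => exact h0
      | succ k ih => rw [hstep, ih, memUpdate_fix Uf hUf p _ (hρs k).2]
    rw [hseq, inducedChan_eq, hE]
end

section
/- If a quantum channel E on a finite-dimensional system is nonunital (E(I) ≠ I), then E is not repeatable with a finite-dimensional memory: there is no unitary U on H_M ⊗ H_S with dim H_M < ∞ and memory state ξ such that the induced channel equals E on every use for all input sequences. -/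
open Matrix Kronecker BigOperators
open scoped ComplexOrder

structure RepeatableImpl {s : Type*} [Fintype s] [DecidableEq s]
    (E : Matrix s s ℂ → Matrix s s ℂ) where
  μ : Type
  [finμ : Fintype μ]
  [decμ : DecidableEq μ]
  U : Matrix (μ × s) (μ × s) ℂ
  ξ : Matrix μ μ ℂ
  unitary : IsUnitary U
  density : IsDensity ξ
  repeats : ∀ (ρs : ℕ → Matrix s s ℂ), (∀ k, IsDensity (ρs k)) →
    ∀ (ξseq : ℕ → Matrix μ μ ℂ), ξseq 0 = ξ →
      (∀ k, ξseq (k + 1) = memUpdate U (ξseq k) (ρs k)) →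
      ∀ n (ρ : Matrix s s ℂ), IsDensity ρ → inducedChan U (ξseq n) ρ = E ρ

/-!
Feed the maximally mixed state `I/d` at every use and watch the purity `‖ξ‖²` (squared
Hilbert–Schmidt norm) of the memory. The joint state `σ = U (ξ ⊗ I/d) U†` has `d‖σ‖² = ‖ξ‖²`.
Splitting off `Tr_S σ ⊗ I/d`, which is Hilbert–Schmidt orthogonal to the rest `τ`, gives
`d‖σ‖² = ‖ξ'‖² + d‖τ‖²` for the next memory state `ξ' = Tr_S σ`, while
`Tr_M τ = E(I/d) - I/d` and `‖Tr_M τ‖² ≤ m‖τ‖²` by Cauchy–Schwarz. So every use lowers the purity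
of the memory by at least `(d/m)‖E(I/d) - I/d‖²`, which is positive when `E` is trace preserving
and nonunital, and a nonnegative quantity cannot do that forever.
-/

open Complex

noncomputable def frobNormSq {m n : Type*} [Fintype m] [Fintype n] (X : Matrix m n ℂ) : ℝ :=
  ∑ i, ∑ j, normSq (X i j)

noncomputable def maxMixed (s : Type*) [Fintype s] [DecidableEq s] : Matrix s s ℂ :=
  (Fintype.card s : ℂ)⁻¹ • 1

lemma normSq_sum_le_card_mul {ι : Type*} (t : Finset ι) (z : ι → ℂ) :
    normSq (∑ i ∈ t, z i) ≤ t.card * ∑ i ∈ t, normSq (z i) := by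
  simp only [← Complex.sq_norm]
  calc ‖∑ i ∈ t, z i‖ ^ 2 ≤ (∑ i ∈ t, ‖z i‖) ^ 2 := by gcongr; exact norm_sum_le t z
    _ ≤ t.card * ∑ i ∈ t, ‖z i‖ ^ 2 := sq_sum_le_card_mul_sum_sq

lemma exists_lt_succ_add {u : ℕ → ℝ} {δ : ℝ} (hu : ∀ n, 0 ≤ u n) (hδ : 0 < δ) :
    ∃ n, u n < u (n + 1) + δ := by
  by_contra! h
  have hdrop : ∀ n, u n + n * δ ≤ u 0 := by
    intro n
    induction n with
    | zero => simp
    | succ k ih => push_cast; linarith [h k]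
  obtain ⟨n, hn⟩ := exists_nat_gt (u 0 / δ)
  rw [div_lt_iff₀ hδ] at hn
  linarith [hdrop n, hu n]

section FrobeniusNorm

variable {m n m' n' : Type*} [Fintype m] [Fintype n] [Fintype m'] [Fintype n']

lemma frobNormSq_nonneg (X : Matrix m n ℂ) : 0 ≤ frobNormSq X :=
  Finset.sum_nonneg fun _ _ => Finset.sum_nonneg fun _ _ => normSq_nonneg _

lemma frobNormSq_pos {X : Matrix m n ℂ} (hX : X ≠ 0) : 0 < frobNormSq X := by
  obtain ⟨i, j, hij⟩ : ∃ i j, X i j ≠ 0 := by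
    by_contra! h
    exact hX (Matrix.ext h)
  exact Finset.sum_pos' (fun _ _ => Finset.sum_nonneg fun _ _ => normSq_nonneg _)
    ⟨i, Finset.mem_univ _, Finset.sum_pos' (fun _ _ => normSq_nonneg _)
      ⟨j, Finset.mem_univ _, normSq_pos.2 hij⟩⟩

lemma frobNormSq_smul (c : ℂ) (X : Matrix m n ℂ) :
    frobNormSq (c • X) = normSq c * frobNormSq X := by
  simp [frobNormSq, Finset.mul_sum]

lemma frobNormSq_one [DecidableEq n] : frobNormSq (1 : Matrix n n ℂ) = Fintype.card n := by
  simp [frobNormSq, Matrix.one_apply]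

lemma frobNormSq_kronecker (X : Matrix m n ℂ) (Y : Matrix m' n' ℂ) :
    frobNormSq (X ⊗ₖ Y) = frobNormSq X * frobNormSq Y := by
  simp only [frobNormSq, Fintype.sum_prod_type, kroneckerMap_apply, normSq_mul,
    Finset.sum_mul_sum]

lemma frobNormSq_sub (X Y : Matrix m n ℂ) :
    frobNormSq (X - Y) = frobNormSq X + frobNormSq Y - 2 * (X * Yᴴ).trace.re := by
  simp only [frobNormSq, Matrix.sub_apply, normSq_sub, trace, diag, mul_apply,
    conjTranspose_apply, RCLike.star_def, re_sum, Finset.sum_sub_distrib,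
    Finset.sum_add_distrib, Finset.mul_sum]

lemma ofReal_frobNormSq (X : Matrix m n ℂ) : (frobNormSq X : ℂ) = (X * Xᴴ).trace := by
  simp only [frobNormSq, trace, diag, mul_apply, conjTranspose_apply, ofReal_sum,
    RCLike.star_def, mul_conj]

lemma frobNormSq_unitary_conj [DecidableEq n] {U : Matrix n n ℂ} (hU : Uᴴ * U = 1)
    (X : Matrix n n ℂ) : frobNormSq (U * X * Uᴴ) = frobNormSq X := by
  apply ofReal_injective
  rw [ofReal_frobNormSq, ofReal_frobNormSq, conjTranspose_mul, conjTranspose_mul,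
    conjTranspose_conjTranspose]
  calc (U * X * Uᴴ * (U * (Xᴴ * Uᴴ))).trace = (U * (X * (Uᴴ * U) * Xᴴ) * Uᴴ).trace := by
        simp only [Matrix.mul_assoc]
    _ = (X * Xᴴ).trace := by
        rw [hU, Matrix.mul_one, trace_mul_cycle, hU, Matrix.one_mul]

end FrobeniusNorm

section PartialTrace

variable {μ s : Type*}

lemma trace_ptraceMem [Fintype μ] [Fintype s] (X : Matrix (μ × s) (μ × s) ℂ) :
    (ptraceMem X).trace = X.trace := by
  simp only [ptraceMem, trace, diag, of_apply, Fintype.sum_prod_type]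
  exact Finset.sum_comm

lemma trace_ptraceSys [Fintype μ] [Fintype s] (X : Matrix (μ × s) (μ × s) ℂ) :
    (ptraceSys X).trace = X.trace := by
  simp only [ptraceSys, trace, diag, of_apply, Fintype.sum_prod_type]

lemma ptraceMem_sub [Fintype μ] (X Y : Matrix (μ × s) (μ × s) ℂ) :
    ptraceMem (X - Y) = ptraceMem X - ptraceMem Y := by
  ext i j
  simp [ptraceMem, Finset.sum_sub_distrib]

lemma ptraceMem_kronecker [Fintype μ] (Y : Matrix μ μ ℂ) (Z : Matrix s s ℂ) :
    ptraceMem (Y ⊗ₖ Z) = Y.trace • Z := by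
  ext i j
  simp [ptraceMem, trace, Finset.sum_mul]

lemma trace_mul_kronecker_one [Fintype μ] [Fintype s] [DecidableEq s]
    (X : Matrix (μ × s) (μ × s) ℂ) (Y : Matrix μ μ ℂ) :
    (X * (Y ⊗ₖ (1 : Matrix s s ℂ))).trace = (ptraceSys X * Y).trace := by
  simp only [ptraceSys, trace, diag, mul_apply, of_apply, Fintype.sum_prod_type,
    kroneckerMap_apply, one_apply, mul_ite, mul_one, mul_zero, Finset.sum_ite_eq',
    Finset.mem_univ, if_true, Finset.sum_mul]
  exact Finset.sum_congr rfl fun _ _ => Finset.sum_comm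

lemma frobNormSq_ptraceMem_le [Fintype μ] [Fintype s] (X : Matrix (μ × s) (μ × s) ℂ) :
    frobNormSq (ptraceMem X) ≤ Fintype.card μ * frobNormSq X := by
  calc frobNormSq (ptraceMem X)
      ≤ ∑ i, ∑ j, Fintype.card μ * ∑ a, normSq (X (a, i) (a, j)) :=
        Finset.sum_le_sum fun i _ => Finset.sum_le_sum fun j _ =>
          normSq_sum_le_card_mul Finset.univ _
    _ ≤ Fintype.card μ * frobNormSq X := by
        simp only [frobNormSq, ← Finset.mul_sum, Fintype.sum_prod_type]
        gcongr
        calc ∑ i, ∑ j, ∑ a, normSq (X (a, i) (a, j))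
            = ∑ a, ∑ i, ∑ j, normSq (X (a, i) (a, j)) := by
              refine (Finset.sum_congr rfl fun i _ => ?_).trans Finset.sum_comm
              exact Finset.sum_comm
          _ ≤ _ := Finset.sum_le_sum fun a _ => Finset.sum_le_sum fun i _ =>
              Finset.single_le_sum (f := fun b => ∑ j, normSq (X (a, i) (b, j)))
                (fun _ _ => Finset.sum_nonneg fun _ _ => normSq_nonneg _) (Finset.mem_univ a)

end PartialTrace

section MaxMixed

variable {s : Type*} [Fintype s] [DecidableEq s]

lemma conjTranspose_maxMixed : (maxMixed s)ᴴ = maxMixed s := by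
  simp [maxMixed]

lemma frobNormSq_maxMixed : frobNormSq (maxMixed s) = (Fintype.card s : ℝ)⁻¹ := by
  rw [maxMixed, frobNormSq_smul, frobNormSq_one, normSq_inv, normSq_natCast]
  rcases eq_or_ne (Fintype.card s : ℝ) 0 with h | h
  · simp [h]
  · field_simp

lemma natCast_smul_maxMixed [Nonempty s] : (Fintype.card s : ℂ) • maxMixed s = 1 := by
  rw [maxMixed, smul_smul, mul_inv_cancel₀ (by simp), one_smul]

lemma isDensity_maxMixed [Nonempty s] : IsDensity (maxMixed s) := by
  refine ⟨PosSemidef.one.smul (by positivity), ?_⟩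
  simp [maxMixed]

end MaxMixed

section Purity

variable {μ s : Type*} [Fintype μ] [Fintype s] [DecidableEq s]

lemma frobNormSq_eq_ptraceSys_add (X : Matrix (μ × s) (μ × s) ℂ) :
    frobNormSq X = frobNormSq (ptraceSys X) / Fintype.card s +
      frobNormSq (X - ptraceSys X ⊗ₖ maxMixed s) := by
  have hcross : (X * (ptraceSys X ⊗ₖ maxMixed s)ᴴ).trace =
      ((Fintype.card s : ℝ)⁻¹ * frobNormSq (ptraceSys X) : ℝ) := by
    rw [conjTranspose_kronecker, conjTranspose_maxMixed, maxMixed, kronecker_smul, Matrix.mul_smul,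
      trace_smul, trace_mul_kronecker_one, ← ofReal_frobNormSq]
    simp
  rw [frobNormSq_sub, hcross, ofReal_re, frobNormSq_kronecker, frobNormSq_maxMixed]
  ring

lemma frobNormSq_ptraceSys_add_le [Nonempty s] (X : Matrix (μ × s) (μ × s) ℂ) :
    frobNormSq (ptraceSys X) + Fintype.card s / Fintype.card μ *
      frobNormSq (ptraceMem X - X.trace • maxMixed s) ≤ Fintype.card s * frobNormSq X := by
  set τ := X - ptraceSys X ⊗ₖ maxMixed s
  have hτ : ptraceMem τ = ptraceMem X - X.trace • maxMixed s := by
    rw [ptraceMem_sub, ptraceMem_kronecker, trace_ptraceSys]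
  have hproj : Fintype.card s / Fintype.card μ * frobNormSq (ptraceMem τ) ≤
      Fintype.card s * frobNormSq τ := by
    rcases eq_or_ne (Fintype.card μ : ℝ) 0 with hm | hm
    · rw [hm, div_zero, zero_mul]
      exact mul_nonneg (Nat.cast_nonneg _) (frobNormSq_nonneg τ)
    · calc _ ≤ Fintype.card s / Fintype.card μ * (Fintype.card μ * frobNormSq τ) := by
            gcongr; exact frobNormSq_ptraceMem_le τ
        _ = _ := by field_simp
  have hd : (Fintype.card s : ℝ) ≠ 0 := by positivity
  rw [← hτ, frobNormSq_eq_ptraceSys_add X, mul_add, mul_div_cancel₀ _ hd]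
  linarith

lemma frobNormSq_memUpdate_add_le [DecidableEq μ] [Nonempty s] {U : Matrix (μ × s) (μ × s) ℂ}
    (hU : Uᴴ * U = 1) (ξ : Matrix μ μ ℂ) :
    frobNormSq (memUpdate U ξ (maxMixed s)) + Fintype.card s / Fintype.card μ *
      frobNormSq (inducedChan U ξ (maxMixed s) -
        (inducedChan U ξ (maxMixed s)).trace • maxMixed s) ≤ frobNormSq ξ := by
  have h := frobNormSq_ptraceSys_add_le (U * (ξ ⊗ₖ maxMixed s) * Uᴴ)
  rw [← trace_ptraceMem, frobNormSq_unitary_conj hU, frobNormSq_kronecker, frobNormSq_maxMixed,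
    mul_left_comm, mul_inv_cancel₀ (by positivity), mul_one] at h
  exact h

end Purity

lemma map_maxMixed_ne_maxMixed {s : Type*} [Fintype s] [DecidableEq s] [Nonempty s]
    (E : Matrix s s ℂ →ₗ[ℂ] Matrix s s ℂ) (hE : E 1 ≠ 1) : E (maxMixed s) ≠ maxMixed s := by
  intro h
  apply hE
  rw [← natCast_smul_maxMixed, map_smul, h]

theorem nonunital_not_repeatable_general
    {s : Type*} [Fintype s] [DecidableEq s] [Nonempty s]
    (E : Matrix s s ℂ →ₗ[ℂ] Matrix s s ℂ)
    (hTP : IsTP E) (hnonunital : E 1 ≠ 1) :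
    ¬ Nonempty (RepeatableImpl (fun ρ => E ρ)) := by
  rintro ⟨R⟩
  let _ := R.finμ
  let _ := R.decμ
  have : Nonempty R.μ := by
    by_contra h
    rw [not_nonempty_iff] at h
    simpa [trace_eq_zero_of_isEmpty] using R.density.2
  let ξs : ℕ → Matrix R.μ R.μ ℂ := fun n => (memUpdate R.U · (maxMixed s))^[n] R.ξ
  have hchan (n : ℕ) : inducedChan R.U (ξs n) (maxMixed s) = E (maxMixed s) :=
    R.repeats (fun _ => maxMixed s) (fun _ => isDensity_maxMixed) ξs rfl
      (fun k => Function.iterate_succ_apply' _ k _) n _ isDensity_maxMixed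
  have htrace : (E (maxMixed s)).trace = 1 := (hTP _).trans isDensity_maxMixed.2
  set δ := Fintype.card s / Fintype.card R.μ * frobNormSq (E (maxMixed s) - maxMixed s)
  have hδ : 0 < δ := mul_pos (by positivity)
    (frobNormSq_pos (sub_ne_zero.2 (map_maxMixed_ne_maxMixed E hnonunital)))
  obtain ⟨n, hn⟩ := exists_lt_succ_add (fun n => frobNormSq_nonneg (ξs n)) hδ
  have hstep := frobNormSq_memUpdate_add_le R.unitary.2 (ξs n)
  rw [hchan, htrace, one_smul, ← Function.iterate_succ_apply' (memUpdate R.U · (maxMixed s))]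
    at hstep
  linarith

theorem nonunital_not_repeatable
    {s : Type*} [Fintype s] [DecidableEq s] [Nonempty s]
    (E : Matrix s s ℂ →ₗ[ℂ] Matrix s s ℂ)
    (hCP : IsCP E) (hTP : IsTP E) (hnonunital : E 1 ≠ 1) :
    ¬ Nonempty (RepeatableImpl (fun ρ => E ρ)) :=
  nonunital_not_repeatable_general E hTP hnonunital
end
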